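/- arXiv:2504.08189 — 3 statements merged into one kernel-verified Lean document; each statement's English description precedes it below -/
import Mathlib

section
/- Let n ≥ 2 and let λ₁ ≤ λ₂ ≤ ... ≤ λₙ be real numbers with R = λ₁ + ... + λₙ. Define B₁₁ := (n-1)·Σᵢ λᵢ² + n·R·λ₁ - n(n-1)·λ₁² - R². Then B₁₁ = (1/2)·Σ_{j,k ≥ 2} (λⱼ - λₖ)² + (n-2)·Σ_{j ≥ 2} (λⱼ - λ₁)·λ₁. -/
open Finset

theorem stmt_0 (n : ℕ) (hn : 2 ≤ n) (lam : Fin n → ℝ) (hmono : Monotone lam)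
    (R : ℝ) (hR : R = ∑ i, lam i) :
    (n - 1 : ℝ) * (∑ i, (lam i) ^ 2) + n * R * lam ⟨0, by omega⟩
      - n * (n - 1) * (lam ⟨0, by omega⟩) ^ 2 - R ^ 2
    = (1 / 2) * ∑ j ∈ univ.erase ⟨0, by omega⟩, ∑ k ∈ univ.erase ⟨0, by omega⟩,
        (lam j - lam k) ^ 2
      + (n - 2 : ℝ) * ∑ j ∈ univ.erase ⟨0, by omega⟩,
          (lam j - lam ⟨0, by omega⟩) * lam ⟨0, by omega⟩ := by
  set z : Fin n := ⟨0, by omega⟩ with hz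
  set e : Finset (Fin n) := univ.erase z with he
  set a : ℝ := lam z with ha
  have hcard : (e.card : ℝ) = (n : ℝ) - 1 := by
    have : e.card = n - 1 := by
      rw [he, card_erase_of_mem (mem_univ z), card_univ, Fintype.card_fin]
    rw [this]
    have : (1:ℕ) ≤ n := by omega
    push_cast [this]
    ring
  have hS : ∑ j ∈ e, lam j = (∑ i, lam i) - a := by
    rw [he, ha, Finset.sum_erase_eq_sub (mem_univ z)]
  have hQ : ∑ j ∈ e, (lam j)^2 = (∑ i, (lam i)^2) - a^2 := by
    rw [he, ha, Finset.sum_erase_eq_sub (ι := Fin n) (f := fun i => (lam i)^2) (mem_univ z)]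
  have hsq : ∑ j ∈ e, ∑ k ∈ e, (lam j - lam k) ^ 2
      = 2 * (e.card : ℝ) * (∑ j ∈ e, (lam j)^2) - 2 * (∑ j ∈ e, lam j)^2 := by
    have : ∀ j ∈ e, ∑ k ∈ e, (lam j - lam k) ^ 2
        = (e.card : ℝ) * (lam j)^2 - 2 * lam j * (∑ k ∈ e, lam k) + ∑ k ∈ e, (lam k)^2 := by
      intro j _
      rw [Finset.sum_congr rfl (fun k _ => by ring :
        ∀ k ∈ e, (lam j - lam k)^2 = (lam j)^2 - 2 * lam j * lam k + (lam k)^2)]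
      rw [Finset.sum_add_distrib, Finset.sum_sub_distrib, Finset.sum_const, ← Finset.mul_sum]
      push_cast
      ring
    rw [Finset.sum_congr rfl this, Finset.sum_add_distrib, Finset.sum_sub_distrib,
      ← Finset.mul_sum,
      Finset.sum_congr rfl (fun i _ => by ring :
        ∀ i ∈ e, 2 * lam i * (∑ k ∈ e, lam k) = lam i * (2 * ∑ k ∈ e, lam k)),
      ← Finset.sum_mul, Finset.sum_const, nsmul_eq_mul]
    ring
  have hlin : ∑ j ∈ e, (lam j - a) * a = (∑ j ∈ e, lam j) * a - (e.card : ℝ) * a^2 := by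
    rw [Finset.sum_congr rfl (fun j _ => by ring :
      ∀ j ∈ e, (lam j - a) * a = lam j * a - a^2)]
    rw [Finset.sum_sub_distrib, ← Finset.sum_mul, Finset.sum_const]
    push_cast
    ring
  rw [hsq, hlin, hS, hQ, hcard, hR]
  have h2 : (2:ℝ) ≤ (n:ℝ) := by exact_mod_cast hn
  ring
end

section
/- Let n ≥ 3 and let λ₁ ≤ λ₂ ≤ ... ≤ λₙ be real numbers. Set R = Σᵢ₌₁ⁿ λᵢ and μ = Σᵢ₌₂ⁿ λᵢ. Then (n-1)·Σᵢ₌₁ⁿ λᵢ² - R² + 2(n-1)·R·λ₁ - n(n-1)·λ₁² ≥ 2(n-2)·μ·λ₁ - (n-2)²·λ₁². -/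
open Finset

theorem stmt_2 (n : ℕ) (hn : 3 ≤ n) (lam : Fin n → ℝ) (hmono : Monotone lam)
    (R mu : ℝ) (hR : R = ∑ i, lam i)
    (hmu : mu = ∑ i ∈ univ.erase ⟨0, by omega⟩, lam i) :
    2 * (n - 2 : ℝ) * mu * lam ⟨0, by omega⟩ - (n - 2 : ℝ) ^ 2 * (lam ⟨0, by omega⟩) ^ 2
      ≤ (n - 1 : ℝ) * (∑ i, (lam i) ^ 2) - R ^ 2 + 2 * (n - 1 : ℝ) * R * lam ⟨0, by omega⟩
        - n * (n - 1) * (lam ⟨0, by omega⟩) ^ 2 := by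
  have h0 : (⟨0, by omega⟩ : Fin n) ∈ (univ : Finset (Fin n)) := mem_univ _
  set i0 : Fin n := ⟨0, by omega⟩
  set s : Finset (Fin n) := univ.erase i0 with hs
  have hcard : (#s : ℝ) = (n : ℝ) - 1 := by
    have : #s = n - 1 := by simp [hs, card_erase_of_mem, card_univ]
    rw [this]
    have : (1 : ℕ) ≤ n := by omega
    push_cast [Nat.cast_sub this]
    ring
  have hCS : mu ^ 2 ≤ ((n : ℝ) - 1) * ∑ i ∈ s, (lam i) ^ 2 := by
    rw [hmu, ← hcard]
    exact_mod_cast sq_sum_le_card_mul_sum_sq (s := s) (f := lam)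
  have hRmu : R = lam i0 + mu := by
    rw [hR, hmu, ← Finset.add_sum_erase _ _ h0]
  have hsq : ∑ i, (lam i) ^ 2 = (lam i0) ^ 2 + ∑ i ∈ s, (lam i) ^ 2 := by
    rw [← Finset.add_sum_erase _ _ h0]
  rw [hsq, hRmu]
  nlinarith [hCS]
end

section
/- Let f : (0, ∞) → [0, ∞) be a function such that t ↦ t·f(t) is nondecreasing on (0, ∞), and suppose there exists C ≥ 0 such that ∫₀^t f(τ) dτ ≤ C for all t > 0. Then f(t) = 0 for all t > 0. -/
open MeasureTheory Set

theorem stmt_14 (f : ℝ → ℝ) (hf : ∀ t > 0, 0 ≤ f t)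
    (hmono : MonotoneOn (fun t => t * f t) (Ioi (0 : ℝ)))
    (C : ℝ) (hC : 0 ≤ C)
    (hint : ∀ t > 0, ∫⁻ τ in Ioc (0 : ℝ) t, ENNReal.ofReal (f τ) ≤ ENNReal.ofReal C) :
    ∀ t > 0, f t = 0 := by
  intro t ht
  by_contra hne
  have hft : 0 < f t := lt_of_le_of_ne (hf t ht) (Ne.symm hne)
  set c : ℝ := t * f t with hc_def
  have hc : 0 < c := mul_pos ht hft
  set T : ℝ := t * Real.exp ((C + 1) / c) with hT_def
  have hexp : 1 < Real.exp ((C + 1) / c) := by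
    have h0 : (0:ℝ) < (C + 1) / c := div_pos (by linarith) hc
    calc (1:ℝ) = Real.exp 0 := by simp
    _ < _ := Real.exp_lt_exp.mpr h0
  have htT : t < T := by
    have := mul_lt_mul_of_pos_left hexp ht
    simpa [hT_def] using this
  have hT0 : 0 < T := ht.trans htT
  -- pointwise lower bound on Ioc t T
  have hlow : ∀ τ ∈ Ioc t T, c / τ ≤ f τ := by
    intro τ hτ
    have hτ0 : 0 < τ := ht.trans hτ.1
    have : t * f t ≤ τ * f τ :=
      hmono (mem_Ioi.mpr ht) (mem_Ioi.mpr hτ0) hτ.1.le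
    rw [div_le_iff₀ hτ0]
    linarith [this]
  -- integrability of c / τ on Icc t T
  have hcont : ContinuousOn (fun τ : ℝ => c / τ) (Icc t T) := by
    apply ContinuousOn.div continuousOn_const continuousOn_id
    intro x hx
    exact ne_of_gt (lt_of_lt_of_le ht hx.1)
  have hInt : IntegrableOn (fun τ : ℝ => c / τ) (Ioc t T) := by
    exact (hcont.integrableOn_compact isCompact_Icc).mono_set Ioc_subset_Icc_self
  -- value of the integral
  have hval : (∫ τ in Ioc t T, c / τ) = c * Real.log (T / t) := by
    rw [← intervalIntegral.integral_of_le htT.le]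
    have : (∫ x in t..T, c / x) = c * ∫ x in t..T, 1 / x := by
      rw [← intervalIntegral.integral_const_mul]
      congr 1; ext x; ring
    rw [this, integral_one_div]
    intro h
    rcases h with h
    have := h.1
    rcases (Set.mem_uIcc.mp h) with ⟨h1, h2⟩ | ⟨h1, h2⟩ <;> linarith
  -- lintegral of lower bound equals ofReal of integral
  have hpos_ae : 0 ≤ᵐ[volume.restrict (Ioc t T)] fun τ : ℝ => c / τ := by
    filter_upwards [ae_restrict_mem measurableSet_Ioc] with τ hτ
    exact div_nonneg hc.le (le_of_lt (ht.trans hτ.1))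
  have hlin : ENNReal.ofReal (∫ τ in Ioc t T, c / τ)
      = ∫⁻ τ in Ioc t T, ENNReal.ofReal (c / τ) :=
    ofReal_integral_eq_lintegral_ofReal hInt hpos_ae
  -- chain of inequalities
  have h1 : (∫⁻ τ in Ioc t T, ENNReal.ofReal (c / τ))
      ≤ ∫⁻ τ in Ioc t T, ENNReal.ofReal (f τ) := by
    apply lintegral_mono_ae
    filter_upwards [ae_restrict_mem measurableSet_Ioc] with τ hτ
    exact ENNReal.ofReal_le_ofReal (hlow τ hτ)
  have h2 : (∫⁻ τ in Ioc t T, ENNReal.ofReal (f τ))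
      ≤ ∫⁻ τ in Ioc 0 T, ENNReal.ofReal (f τ) :=
    lintegral_mono_set (Ioc_subset_Ioc_left ht.le)
  have h3 := hint T hT0
  have hfinal : ENNReal.ofReal (c * Real.log (T / t)) ≤ ENNReal.ofReal C := by
    rw [← hval, hlin]
    exact h1.trans (h2.trans h3)
  have hlog : Real.log (T / t) = (C + 1) / c := by
    rw [hT_def, mul_comm, mul_div_assoc, div_self (ne_of_gt ht), mul_one, Real.log_exp]
  rw [hlog, mul_div_cancel₀ _ (ne_of_gt hc)] at hfinal
  have : C + 1 ≤ C := (ENNReal.ofReal_le_ofReal_iff hC).mp hfinal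
  linarith
end
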